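/- Let G be a finite simple graph. Suppose the vertex set of G is A ∪ B with L = A ∩ B, L is a module of G, and every vertex of A \ L is adjacent in G to every vertex of B \ L. Put α = ω(G[A]) + ω(G[B]) − ω(G[L]) and β = ω(G[A \ L]) + ω(G[B \ L]). If α ≤ β, then for every maximum clique K¹ of G[A \ L] and every maximum clique K² of G[B \ L], the set K¹ ∪ K² is a maximum clique of G. -/
import Mathlib


/-- `K` is a clique of `G` entirely contained in the vertex subset `S`;
equivalently, a clique of the induced subgraph `G[S]`. -/
def IsCliqueOn {V : Type*} (G : SimpleGraph V) (S K : Finset V) : Prop :=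
  K ⊆ S ∧ G.IsClique (K : Set V)

/-- `K` is a maximum clique of the induced subgraph `G[S]`. -/
def IsMaxCliqueOn {V : Type*} (G : SimpleGraph V) (S K : Finset V) : Prop :=
  IsCliqueOn G S K ∧ ∀ K' : Finset V, IsCliqueOn G S K' → K'.card ≤ K.card

/-- The clique number `ω(G[S])` of the induced subgraph `G[S]`. -/
noncomputable def omegaOn {V : Type*} (G : SimpleGraph V) (S : Finset V) : ℕ :=
  sSup {n | ∃ K : Finset V, IsCliqueOn G S K ∧ K.card = n}

/-- `M` is a module of `G`: every vertex outside `M` is adjacent either to all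
vertices of `M` or to none of them. -/
def IsModuleF {V : Type*} (G : SimpleGraph V) (M : Finset V) : Prop :=
  ∀ z ∉ M, (∀ x ∈ M, G.Adj z x) ∨ (∀ x ∈ M, ¬ G.Adj z x)

lemma omegaSet_bdd {V : Type*} [Fintype V] (G : SimpleGraph V) (S : Finset V) :
    BddAbove {n | ∃ K : Finset V, IsCliqueOn G S K ∧ K.card = n} := by
  refine ⟨Fintype.card V, fun n hn => ?_⟩
  obtain ⟨K, _, hK⟩ := hn
  exact hK ▸ Finset.card_le_univ K

lemma omegaSet_nonempty {V : Type*} [Fintype V] (G : SimpleGraph V) (S : Finset V) :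
    {n | ∃ K : Finset V, IsCliqueOn G S K ∧ K.card = n}.Nonempty :=
  ⟨0, ∅, ⟨Finset.empty_subset S, by simp⟩, rfl⟩

lemma le_omegaOn {V : Type*} [Fintype V] {G : SimpleGraph V} {S K : Finset V}
    (h : IsCliqueOn G S K) : K.card ≤ omegaOn G S :=
  le_csSup (omegaSet_bdd G S) ⟨K, h, rfl⟩

lemma exists_omega_clique {V : Type*} [Fintype V] (G : SimpleGraph V) (S : Finset V) :
    ∃ K : Finset V, IsCliqueOn G S K ∧ K.card = omegaOn G S :=
  Nat.sSup_mem (omegaSet_nonempty G S) (omegaSet_bdd G S)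

lemma max_clique_card {V : Type*} [Fintype V] {G : SimpleGraph V} {S K : Finset V}
    (h : IsMaxCliqueOn G S K) : K.card = omegaOn G S := by
  obtain ⟨C, hC, hcard⟩ := exists_omega_clique G S
  exact le_antisymm (le_omegaOn h.1) (hcard ▸ h.2 C hC)

/-- Same setting; if `α ≤ β`, then the union of any maximum clique of
`G[A \ L]` and any maximum clique of `G[B \ L]` is a maximum clique of `G`. -/
theorem stmt7 {V : Type*} [Fintype V] [DecidableEq V]
    (G : SimpleGraph V) (A B L : Finset V)
    (hUnion : A ∪ B = Finset.univ) (hL : L = A ∩ B)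
    (hmod : IsModuleF G L)
    (hjoin : ∀ x ∈ A \ L, ∀ y ∈ B \ L, G.Adj x y)
    (hab : omegaOn G A + omegaOn G B - omegaOn G L ≤
           omegaOn G (A \ L) + omegaOn G (B \ L)) :
    ∀ K₁ K₂ : Finset V, IsMaxCliqueOn G (A \ L) K₁ → IsMaxCliqueOn G (B \ L) K₂ →
      IsMaxCliqueOn G Finset.univ (K₁ ∪ K₂) := by
  intro K₁ K₂ h₁ h₂
  have hALBL : Disjoint (A \ L) (B \ L) := by
    rw [Finset.disjoint_left]
    intro x hx hx'
    simp only [Finset.mem_sdiff] at hx hx'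
    exact hx.2 (hL ▸ Finset.mem_inter.mpr ⟨hx.1, hx'.1⟩)
  have hdisj : Disjoint K₁ K₂ := hALBL.mono h₁.1.1 h₂.1.1
  have hclique : G.IsClique ((K₁ ∪ K₂ : Finset V) : Set V) := by
    intro x hx y hy hxy
    simp only [Finset.coe_union, Set.mem_union, Finset.mem_coe] at hx hy
    rcases hx with hx | hx <;> rcases hy with hy | hy
    · exact h₁.1.2 hx hy hxy
    · exact hjoin x (h₁.1.1 hx) y (h₂.1.1 hy)
    · exact (hjoin y (h₁.1.1 hy) x (h₂.1.1 hx)).symm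
    · exact h₂.1.2 hx hy hxy
  have hcard : (K₁ ∪ K₂).card = omegaOn G (A \ L) + omegaOn G (B \ L) := by
    rw [Finset.card_union_of_disjoint hdisj, max_clique_card h₁, max_clique_card h₂]
  refine ⟨⟨Finset.subset_univ _, hclique⟩, ?_⟩
  intro K' hK'
  rw [hcard]
  -- cliques inside A \ L and B \ L
  have haL : IsCliqueOn G (A \ L) (K' ∩ (A \ L)) :=
    ⟨Finset.inter_subset_right, hK'.2.subset (by simp [Finset.subset_iff])⟩
  have hbL : IsCliqueOn G (B \ L) (K' ∩ (B \ L)) :=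
    ⟨Finset.inter_subset_right, hK'.2.subset (by simp [Finset.subset_iff])⟩
  have hsub3 : K' ⊆ (K' ∩ (A \ L)) ∪ (K' ∩ (B \ L)) ∪ (K' ∩ L) := by
    intro v hv
    have hvAB : v ∈ A ∪ B := hUnion ▸ Finset.mem_univ v
    by_cases hvL : v ∈ L
    · exact Finset.mem_union_right _ (Finset.mem_inter.mpr ⟨hv, hvL⟩)
    · rcases Finset.mem_union.mp hvAB with hvA | hvB
      · exact Finset.mem_union_left _ <| Finset.mem_union_left _ <|
          Finset.mem_inter.mpr ⟨hv, Finset.mem_sdiff.mpr ⟨hvA, hvL⟩⟩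
      · exact Finset.mem_union_left _ <| Finset.mem_union_right _ <|
          Finset.mem_inter.mpr ⟨hv, Finset.mem_sdiff.mpr ⟨hvB, hvL⟩⟩
  have hcard3 : K'.card ≤ (K' ∩ (A \ L)).card + (K' ∩ (B \ L)).card + (K' ∩ L).card :=
    le_trans (Finset.card_le_card hsub3)
      (le_trans (Finset.card_union_le _ _) (Nat.add_le_add_right (Finset.card_union_le _ _) _))
  by_cases hKL : (K' ∩ L).Nonempty
  · -- K' meets L: bound by α, then use hab
    obtain ⟨z, hz⟩ := hKL
    have hzK := Finset.mem_inter.mp hz |>.1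
    have hzL := Finset.mem_inter.mp hz |>.2
    obtain ⟨C, hC, hCcard⟩ := exists_omega_clique G L
    have hadjL : ∀ w ∈ K', w ∉ L → ∀ x ∈ L, G.Adj w x := by
      intro w hw hwL x hxL
      rcases hmod w hwL with h | h
      · exact h x hxL
      · exact absurd (hK'.2 (Finset.mem_coe.mpr hw) (Finset.mem_coe.mpr hzK)
          (fun e => hwL (e ▸ hzL))) (h z hzL)
    have hLA : L ⊆ A := hL ▸ Finset.inter_subset_left
    have hLB : L ⊆ B := hL ▸ Finset.inter_subset_right
    have key : ∀ (S : Finset V), L ⊆ S →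
        ((K' ∩ (S \ L)) ∪ C).card ≤ omegaOn G S := by
      intro S hLS
      apply le_omegaOn (G := G)
      constructor
      · intro v hv
        rcases Finset.mem_union.mp hv with hv | hv
        · exact Finset.mem_sdiff.mp (Finset.mem_inter.mp hv).2 |>.1
        · exact hLS (hC.1 hv)
      · intro x hx y hy hxy
        simp only [Finset.coe_union, Set.mem_union, Finset.mem_coe] at hx hy
        rcases hx with hx | hx <;> rcases hy with hy | hy
        · exact hK'.2 (Finset.mem_coe.mpr (Finset.mem_inter.mp hx).1)
            (Finset.mem_coe.mpr (Finset.mem_inter.mp hy).1) hxy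
        · exact hadjL x (Finset.mem_inter.mp hx).1
            (Finset.mem_sdiff.mp (Finset.mem_inter.mp hx).2).2 y (hC.1 hy)
        · exact (hadjL y (Finset.mem_inter.mp hy).1
            (Finset.mem_sdiff.mp (Finset.mem_inter.mp hy).2).2 x (hC.1 hx)).symm
        · exact hC.2 hx hy hxy
    have hdisjC : ∀ S : Finset V, Disjoint (K' ∩ (S \ L)) C := by
      intro S
      refine Finset.disjoint_left.mpr fun x hx hxC => ?_
      exact (Finset.mem_sdiff.mp (Finset.mem_inter.mp hx).2).2 (hC.1 hxC)
    have hA' : (K' ∩ (A \ L)).card + omegaOn G L ≤ omegaOn G A := by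
      have := key A hLA
      rwa [Finset.card_union_of_disjoint (hdisjC A), hCcard] at this
    have hB' : (K' ∩ (B \ L)).card + omegaOn G L ≤ omegaOn G B := by
      have := key B hLB
      rwa [Finset.card_union_of_disjoint (hdisjC B), hCcard] at this
    have hl : (K' ∩ L).card ≤ omegaOn G L :=
      le_omegaOn ⟨Finset.inter_subset_right, hK'.2.subset (by simp [Finset.subset_iff])⟩
    omega
  · -- K' misses L: bound directly by β
    have hKL' : (K' ∩ L).card = 0 := by
      rw [Finset.card_eq_zero]
      exact Finset.not_nonempty_iff_eq_empty.mp hKL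
    have ha := le_omegaOn haL
    have hb := le_omegaOn hbL
    omega
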